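/- arXiv:1305.4990 — 2 statements merged into one kernel-verified Lean document; each statement's English description precedes it below -/
import Mathlib

section
/- For every nondegenerate gyrotriangle A1A2A3 in 𝔹 with gyroangles α1, α2, α3, one has the identity cos α3 + cos α1 · cos α2 = γ12 · sin α1 · sin α2. -/
open RealInnerProductSpace

/-- Lorentz gamma factor of a vector `v` in the `s`-ball of `ℝⁿ`. -/
noncomputable def egamma {n : ℕ} (s : ℝ) (v : EuclideanSpace ℝ (Fin n)) : ℝ :=
  1 / Real.sqrt (1 - ‖v‖ ^ 2 / s ^ 2)

/-- Einstein addition on the `s`-ball of `ℝⁿ`. -/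
noncomputable def eadd {n : ℕ} (s : ℝ) (u v : EuclideanSpace ℝ (Fin n)) :
    EuclideanSpace ℝ (Fin n) :=
  (1 / (1 + ⟪u, v⟫ / s ^ 2)) •
    (u + (1 / egamma s u) • v + (egamma s u / (s ^ 2 * (1 + egamma s u))) • ⟪u, v⟫ • u)

/-- Gyroangle at vertex `X` between points `Y` and `Z`. -/
noncomputable def gyroangle {n : ℕ} (s : ℝ) (X Y Z : EuclideanSpace ℝ (Fin n)) : ℝ :=
  Real.arccos ⟪‖eadd s (-X) Y‖⁻¹ • eadd s (-X) Y, ‖eadd s (-X) Z‖⁻¹ • eadd s (-X) Z⟫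

/-- Gamma factor of a real gyrodistance `d`. -/
noncomputable def gammaR (s d : ℝ) : ℝ := 1 / Real.sqrt (1 - d ^ 2 / s ^ 2)

/-!
The gamma factor of a gyrodifference factors as
`γ_XY := γ(⊖X ⊕ Y) = γ_X γ_Y (1 - ⟪X, Y⟫/s²)` (`relGamma`), and
`⟪⊖X ⊕ Y, ⊖X ⊕ Z⟫ = s² (1 - γ_YZ / (γ_XY γ_XZ))`. Hence each gyroangle obeys the hyperbolic
law of cosines `cos α₁ = (γ₁₂ γ₁₃ - γ₂₃) / (√(γ₁₂² - 1) √(γ₁₃² - 1))`, and the identity becomes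
one about three reals `a = γ₂₃, b = γ₁₃, c = γ₁₂ > 1`: as the sines are nonnegative, both
`cos α₃ + cos α₁ cos α₂` and `c sin α₁ sin α₂` equal `c D / ((c² - 1) √(a² - 1) √(b² - 1))`
with `D = 1 + 2abc - a² - b² - c²`.
-/

open InnerProductGeometry

noncomputable def relGamma {n : ℕ} (s : ℝ) (X Y : EuclideanSpace ℝ (Fin n)) : ℝ :=
  egamma s X * egamma s Y * (1 - ⟪X, Y⟫ / s ^ 2)

section
variable {n : ℕ} {s : ℝ} {X Y Z : EuclideanSpace ℝ (Fin n)}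

lemma real_inner_lt_sq (hX : ‖X‖ < s) (hY : ‖Y‖ < s) : ⟪X, Y⟫ < s ^ 2 :=
  calc ⟪X, Y⟫ ≤ ‖X‖ * ‖Y‖ := real_inner_le_norm X Y
    _ < s ^ 2 := by nlinarith [norm_nonneg X, norm_nonneg Y]

lemma one_sub_inner_div_pos (hs : 0 < s) (hX : ‖X‖ < s) (hY : ‖Y‖ < s) :
    0 < 1 - ⟪X, Y⟫ / s ^ 2 := by
  rw [sub_pos, div_lt_one (by positivity)]
  exact real_inner_lt_sq hX hY

lemma one_sub_norm_sq_div_pos (hs : 0 < s) (hX : ‖X‖ < s) : 0 < 1 - ‖X‖ ^ 2 / s ^ 2 := by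
  simpa only [real_inner_self_eq_norm_sq] using one_sub_inner_div_pos hs hX hX

lemma egamma_pos (hs : 0 < s) (hX : ‖X‖ < s) : 0 < egamma s X := by
  have := one_sub_norm_sq_div_pos hs hX
  unfold egamma; positivity

lemma egamma_sq_mul (hs : 0 < s) (hX : ‖X‖ < s) :
    egamma s X ^ 2 * (1 - ‖X‖ ^ 2 / s ^ 2) = 1 := by
  have := one_sub_norm_sq_div_pos hs hX
  rw [egamma, div_pow, one_pow, Real.sq_sqrt this.le, one_div_mul_cancel this.ne']

lemma egamma_neg (s : ℝ) (X : EuclideanSpace ℝ (Fin n)) : egamma s (-X) = egamma s X := by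
  simp only [egamma, norm_neg]

lemma relGamma_comm (s : ℝ) (X Y : EuclideanSpace ℝ (Fin n)) :
    relGamma s X Y = relGamma s Y X := by
  rw [relGamma, relGamma, real_inner_comm]; ring

lemma relGamma_pos (hs : 0 < s) (hX : ‖X‖ < s) (hY : ‖Y‖ < s) : 0 < relGamma s X Y := by
  have := egamma_pos hs hX
  have := egamma_pos hs hY
  have := one_sub_inner_div_pos hs hX hY
  unfold relGamma; positivity

lemma relGamma_self (hs : 0 < s) (hX : ‖X‖ < s) : relGamma s X X = 1 := by
  rw [relGamma, real_inner_self_eq_norm_sq]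
  linear_combination egamma_sq_mul hs hX

-- `(s² - ⟪X, Y⟫)² - (s² - ‖X‖²)(s² - ‖Y‖²) = (s² - ‖X‖²)‖X - Y‖² + (⟪X, Y⟫ - ‖X‖²)²`
lemma one_lt_relGamma (hs : 0 < s) (hX : ‖X‖ < s) (hY : ‖Y‖ < s) (hXY : X ≠ Y) :
    1 < relGamma s X Y := by
  have hx := one_sub_norm_sq_div_pos hs hX
  have hXY' : 0 < ‖X - Y‖ ^ 2 := by positivity [sub_ne_zero.2 hXY]
  have hgap : (1 - ‖X‖ ^ 2 / s ^ 2) * (1 - ‖Y‖ ^ 2 / s ^ 2) < (1 - ⟪X, Y⟫ / s ^ 2) ^ 2 := by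
    have key : (1 - ⟪X, Y⟫ / s ^ 2) ^ 2 - (1 - ‖X‖ ^ 2 / s ^ 2) * (1 - ‖Y‖ ^ 2 / s ^ 2) =
        ((1 - ‖X‖ ^ 2 / s ^ 2) * ‖X - Y‖ ^ 2 + (⟪X, Y⟫ - ‖X‖ ^ 2) ^ 2 / s ^ 2) / s ^ 2 := by
      rw [norm_sub_sq_real]; field_simp; ring
    have : 0 < ((1 - ‖X‖ ^ 2 / s ^ 2) * ‖X - Y‖ ^ 2 + (⟪X, Y⟫ - ‖X‖ ^ 2) ^ 2 / s ^ 2) / s ^ 2 := by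
      positivity
    linarith
  rw [← one_lt_sq_iff₀ (relGamma_pos hs hX hY).le, relGamma]
  have := egamma_pos hs hX
  have := egamma_pos hs hY
  calc (1 : ℝ)
      = egamma s X ^ 2 * egamma s Y ^ 2 * ((1 - ‖X‖ ^ 2 / s ^ 2) * (1 - ‖Y‖ ^ 2 / s ^ 2)) := by
        linear_combination -(egamma s Y ^ 2 * (1 - ‖Y‖ ^ 2 / s ^ 2)) * egamma_sq_mul hs hX -
          egamma_sq_mul hs hY
    _ < egamma s X ^ 2 * egamma s Y ^ 2 * (1 - ⟪X, Y⟫ / s ^ 2) ^ 2 :=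
        mul_lt_mul_of_pos_left hgap (by positivity)
    _ = _ := by ring

lemma inner_eadd_neg_eadd_neg (hs : 0 < s) (hX : ‖X‖ < s) (hY : ‖Y‖ < s) (hZ : ‖Z‖ < s) :
    ⟪eadd s (-X) Y, eadd s (-X) Z⟫ =
      s ^ 2 * (1 - relGamma s Y Z / (relGamma s X Y * relGamma s X Z)) := by
  have hg := egamma_pos hs hX
  have := egamma_pos hs hY
  have := egamma_pos hs hZ
  have hp := (sub_pos.2 (real_inner_lt_sq hX hY)).ne'
  have hq := (sub_pos.2 (real_inner_lt_sq hX hZ)).ne'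
  have hx : ‖X‖ ^ 2 = s ^ 2 * (1 - 1 / egamma s X ^ 2) := by
    have := egamma_sq_mul hs hX
    field_simp at this ⊢; linarith
  simp only [eadd, relGamma, egamma_neg, inner_smul_left, inner_smul_right, inner_add_left,
    inner_add_right, inner_neg_left, inner_neg_right, real_inner_self_eq_norm_sq, conj_trivial,
    real_inner_comm X Y, hx, neg_div, ← sub_eq_add_neg]
  field_simp
  ring

lemma norm_eadd_neg_sq (hs : 0 < s) (hX : ‖X‖ < s) (hY : ‖Y‖ < s) :
    ‖eadd s (-X) Y‖ ^ 2 = s ^ 2 * (1 - 1 / relGamma s X Y ^ 2) := by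
  rw [← real_inner_self_eq_norm_sq, inner_eadd_neg_eadd_neg hs hX hY hY, relGamma_self hs hY]
  ring

lemma egamma_eadd_neg (hs : 0 < s) (hX : ‖X‖ < s) (hY : ‖Y‖ < s) :
    egamma s (eadd s (-X) Y) = relGamma s X Y := by
  have hG := relGamma_pos hs hX hY
  have h : 1 - ‖eadd s (-X) Y‖ ^ 2 / s ^ 2 = (1 / relGamma s X Y) ^ 2 := by
    rw [norm_eadd_neg_sq hs hX hY]; field_simp; ring
  rw [egamma, h, Real.sqrt_sq (by positivity), one_div_one_div]

lemma norm_eadd_neg (hs : 0 < s) (hX : ‖X‖ < s) (hY : ‖Y‖ < s) (hXY : X ≠ Y) :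
    ‖eadd s (-X) Y‖ = s * √(relGamma s X Y ^ 2 - 1) / relGamma s X Y := by
  have hG := relGamma_pos hs hX hY
  have hG1 : 0 ≤ relGamma s X Y ^ 2 - 1 := by nlinarith [one_lt_relGamma hs hX hY hXY]
  rw [← sq_eq_sq₀ (norm_nonneg _) (by positivity), norm_eadd_neg_sq hs hX hY, div_pow, mul_pow,
    Real.sq_sqrt hG1]
  field_simp

lemma gyroangle_eq_angle (s : ℝ) (X Y Z : EuclideanSpace ℝ (Fin n)) :
    gyroangle s X Y Z = angle (eadd s (-X) Y) (eadd s (-X) Z) := by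
  rw [gyroangle, angle, real_inner_smul_left, real_inner_smul_right, div_eq_mul_inv, mul_inv]
  ring_nf

lemma sin_gyroangle_nonneg (s : ℝ) (X Y Z : EuclideanSpace ℝ (Fin n)) :
    0 ≤ Real.sin (gyroangle s X Y Z) := by
  rw [gyroangle_eq_angle]
  exact sin_angle_nonneg _ _

lemma cos_gyroangle (hs : 0 < s) (hX : ‖X‖ < s) (hY : ‖Y‖ < s) (hZ : ‖Z‖ < s) (hXY : X ≠ Y)
    (hXZ : X ≠ Z) :
    Real.cos (gyroangle s X Y Z) =
      (relGamma s X Y * relGamma s X Z - relGamma s Y Z) /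
        (√(relGamma s X Y ^ 2 - 1) * √(relGamma s X Z ^ 2 - 1)) := by
  have := relGamma_pos hs hX hY
  have := relGamma_pos hs hX hZ
  have : 0 < √(relGamma s X Y ^ 2 - 1) :=
    Real.sqrt_pos.2 (by nlinarith [one_lt_relGamma hs hX hY hXY])
  have : 0 < √(relGamma s X Z ^ 2 - 1) :=
    Real.sqrt_pos.2 (by nlinarith [one_lt_relGamma hs hX hZ hXZ])
  rw [gyroangle_eq_angle, cos_angle, inner_eadd_neg_eadd_neg hs hX hY hZ, norm_eadd_neg hs hX hY hXY,
    norm_eadd_neg hs hX hZ hXZ]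
  field_simp

end

lemma cos_add_cos_mul_cos_eq {a b c α₁ α₂ α₃ : ℝ} (ha : 1 < a) (hb : 1 < b) (hc : 1 < c)
    (h₁ : Real.cos α₁ = (c * b - a) / (√(c ^ 2 - 1) * √(b ^ 2 - 1)))
    (h₂ : Real.cos α₂ = (c * a - b) / (√(c ^ 2 - 1) * √(a ^ 2 - 1)))
    (h₃ : Real.cos α₃ = (b * a - c) / (√(b ^ 2 - 1) * √(a ^ 2 - 1)))
    (hs₁ : 0 ≤ Real.sin α₁) (hs₂ : 0 ≤ Real.sin α₂) :
    Real.cos α₃ + Real.cos α₁ * Real.cos α₂ = c * Real.sin α₁ * Real.sin α₂ := by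
  have hσa : 0 < √(a ^ 2 - 1) := Real.sqrt_pos.2 (by nlinarith)
  have hσb : 0 < √(b ^ 2 - 1) := Real.sqrt_pos.2 (by nlinarith)
  have hσc : 0 < √(c ^ 2 - 1) := Real.sqrt_pos.2 (by nlinarith)
  have ha2 := Real.sq_sqrt (by nlinarith : 0 ≤ a ^ 2 - 1)
  have hb2 := Real.sq_sqrt (by nlinarith : 0 ≤ b ^ 2 - 1)
  have hc2 := Real.sq_sqrt (by nlinarith : 0 ≤ c ^ 2 - 1)
  set σa := √(a ^ 2 - 1)
  set σb := √(b ^ 2 - 1)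
  set σc := √(c ^ 2 - 1)
  have hsin₁ : (Real.sin α₁ * (σc * σb)) ^ 2 = 1 + 2 * a * b * c - a ^ 2 - b ^ 2 - c ^ 2 := by
    have := Real.sin_sq_add_cos_sq α₁
    rw [h₁] at this
    field_simp at this
    linear_combination this + σb ^ 2 * hc2 + (c ^ 2 - 1) * hb2
  have hsin₂ : (Real.sin α₂ * (σc * σa)) ^ 2 = 1 + 2 * a * b * c - a ^ 2 - b ^ 2 - c ^ 2 := by
    have := Real.sin_sq_add_cos_sq α₂
    rw [h₂] at this
    field_simp at this
    linear_combination this + σa ^ 2 * hc2 + (c ^ 2 - 1) * ha2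
  have hsin : Real.sin α₁ * (σc * σb) = Real.sin α₂ * (σc * σa) :=
    (sq_eq_sq₀ (by positivity) (by positivity)).1 (hsin₁.trans hsin₂.symm)
  calc Real.cos α₃ + Real.cos α₁ * Real.cos α₂
      = c * (1 + 2 * a * b * c - a ^ 2 - b ^ 2 - c ^ 2) / (σc ^ 2 * σa * σb) := by
        rw [h₁, h₂, h₃]
        field_simp
        linear_combination (b * a - c) * hc2
    _ = c * Real.sin α₁ * Real.sin α₂ := by
        rw [← hsin₁, pow_two (Real.sin α₁ * (σc * σb))]
        nth_rewrite 2 [hsin]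
        field_simp

theorem gyrotriangle_cos_identity_general {n : ℕ} (s : ℝ) (hs : 0 < s)
    (A1 A2 A3 : EuclideanSpace ℝ (Fin n))
    (hA1 : ‖A1‖ < s) (hA2 : ‖A2‖ < s) (hA3 : ‖A3‖ < s)
    (h12 : A1 ≠ A2) (h13 : A1 ≠ A3) (h23 : A2 ≠ A3)
    (γ12 α1 α2 α3 : ℝ)
    (hγ12 : γ12 = egamma s (eadd s (-A1) A2))
    (hα1 : α1 = gyroangle s A1 A2 A3)
    (hα2 : α2 = gyroangle s A2 A1 A3)
    (hα3 : α3 = gyroangle s A3 A1 A2) :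
    Real.cos α3 + Real.cos α1 * Real.cos α2 = γ12 * Real.sin α1 * Real.sin α2 := by
  subst hγ12 hα1 hα2 hα3
  rw [egamma_eadd_neg hs hA1 hA2]
  refine cos_add_cos_mul_cos_eq (one_lt_relGamma hs hA2 hA3 h23)
    (one_lt_relGamma hs hA1 hA3 h13) (one_lt_relGamma hs hA1 hA2 h12)
    (cos_gyroangle hs hA1 hA2 hA3 h12 h13) ?_ ?_ (sin_gyroangle_nonneg ..) (sin_gyroangle_nonneg ..)
  · rw [cos_gyroangle hs hA2 hA1 hA3 h12.symm h23, relGamma_comm s A2 A1]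
  · rw [cos_gyroangle hs hA3 hA1 hA2 h13.symm h23.symm, relGamma_comm s A3 A1,
      relGamma_comm s A3 A2]

/-- **Gyrotriangle identity** `cos α3 + cos α1 · cos α2 = γ12 · sin α1 · sin α2`. -/
theorem gyrotriangle_cos_identity {n : ℕ} (hn : 2 ≤ n) (s : ℝ) (hs : 0 < s)
    (A1 A2 A3 : EuclideanSpace ℝ (Fin n))
    (hA1 : ‖A1‖ < s) (hA2 : ‖A2‖ < s) (hA3 : ‖A3‖ < s)
    (h12 : A1 ≠ A2) (h13 : A1 ≠ A3) (h23 : A2 ≠ A3)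
    (hncol : ¬ Collinear ℝ ({A1, A2, A3} : Set (EuclideanSpace ℝ (Fin n))))
    (γ12 α1 α2 α3 : ℝ)
    (hγ12 : γ12 = egamma s (eadd s (-A1) A2))
    (hα1 : α1 = gyroangle s A1 A2 A3)
    (hα2 : α2 = gyroangle s A2 A1 A3)
    (hα3 : α3 = gyroangle s A3 A1 A2) :
    Real.cos α3 + Real.cos α1 * Real.cos α2 = γ12 * Real.sin α1 * Real.sin α2 :=
  gyrotriangle_cos_identity_general s hs A1 A2 A3 hA1 hA2 hA3 h12 h13 h23 γ12 α1 α2 α3 hγ12 hα1 hα2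
    hα3
end

section
/- (Intersecting Gyrochords Theorem.) Let O ∈ 𝔹, 0 < R < s, and let A1, A2, B1, B2 ∈ 𝔹 satisfy |OA1| = |OA2| = |OB1| = |OB2| = R with A1 ≠ A2 and B1 ≠ B2. Let P be a point lying strictly between A1 and A2 on the Euclidean segment from A1 to A2, and also strictly between B1 and B2 on the Euclidean segment from B1 to B2 (so that the two gyrochords A1A2 and B1B2 intersect at P). Then γ_{|PA1|}·|PA1| · γ_{|PA2|}·|PA2| / (γ_{|A1A2|} + 1) = γ_{|PB1|}·|PB1| · γ_{|PB2|}·|PB2| / (γ_{|B1B2|} + 1). -/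
open RealInnerProductSpace

/-!
The gamma factor of the gyrodistance is `γ_{|uv|} = γ_u γ_v (1 - ⟪u, v⟫ / s²)`; divided by `γ_u`
it is affine in `u`. So if `P` lies on the chord `X₁X₂` then `γ_{|PV|} = a γ_{|X₁V|} + b γ_{|X₂V|}`
for every `V`, with fixed `a, b ≥ 0` (in the hyperboloid model, `P` is `a X₁ + b X₂`). Taking
`V = P, X₁, X₂, O` and writing `c = γ_{|X₁X₂|}` gives `a² + b² + 2abc = 1`, `γ_{|PX₁|} = a + bc`,
`γ_{|PX₂|} = ac + b` and `γ_{|OP|} = (a + b) γ_R`. Since `(γ_d d)² = s² (γ_d² - 1)`, the product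
along the chord divided by `c + 1` is `s² ab (c - 1) = s² (1 - (γ_{|OP|} / γ_R)²) / 2`, which
depends only on `O`, `P` and `R`.
-/

section Einstein

variable {n : ℕ} {s : ℝ} {u v : EuclideanSpace ℝ (Fin n)}

lemma one_sub_sq_div_sq_pos {d : ℝ} (hd : |d| < s) : 0 < 1 - d ^ 2 / s ^ 2 := by
  have hs : 0 < s := (abs_nonneg d).trans_lt hd
  rw [sub_pos, div_lt_one (by positivity), ← sq_abs]
  exact pow_lt_pow_left₀ hd (abs_nonneg d) two_ne_zero

lemma one_sub_norm_sq_div_sq_pos (hu : ‖u‖ < s) : 0 < 1 - ‖u‖ ^ 2 / s ^ 2 :=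
  one_sub_sq_div_sq_pos ((abs_norm u).symm ▸ hu)

lemma one_le_gammaR {d : ℝ} (hd : |d| < s) : 1 ≤ gammaR s d := by
  have h := one_sub_sq_div_sq_pos hd
  rw [gammaR, le_div_iff₀ (Real.sqrt_pos.mpr h), one_mul, Real.sqrt_le_one]
  linarith [div_nonneg (sq_nonneg d) (sq_nonneg s)]

lemma gammaR_sq {d : ℝ} (hd : |d| < s) : gammaR s d ^ 2 = 1 / (1 - d ^ 2 / s ^ 2) := by
  rw [gammaR, div_pow, one_pow, Real.sq_sqrt (one_sub_sq_div_sq_pos hd).le]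

lemma sq_gammaR_mul_self {d : ℝ} (hd : |d| < s) :
    (gammaR s d * d) ^ 2 = s ^ 2 * (gammaR s d ^ 2 - 1) := by
  have h := one_sub_sq_div_sq_pos hd
  have hs : s ≠ 0 := ((abs_nonneg d).trans_lt hd).ne'
  have h1 : gammaR s d ^ 2 * (1 - d ^ 2 / s ^ 2) = 1 := by
    rw [gammaR_sq hd, one_div_mul_cancel h.ne']
  field_simp at h1
  linear_combination -h1

lemma chord_product_eq {a b c x1 x2 : ℝ} (ha : 0 ≤ a) (hb : 0 ≤ b) (hc : 1 ≤ c)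
    (hunit : a * (a + b * c) + b * (a * c + b) = 1)
    (hx1 : 0 ≤ x1) (hx1sq : x1 ^ 2 = s ^ 2 * ((a + b * c) ^ 2 - 1))
    (hx2 : 0 ≤ x2) (hx2sq : x2 ^ 2 = s ^ 2 * ((a * c + b) ^ 2 - 1)) :
    x1 * x2 / (c + 1) = s ^ 2 * (1 - (a + b) ^ 2) / 2 := by
  have hc2 : 0 ≤ c ^ 2 - 1 := by nlinarith
  have hprod : x1 * x2 = s ^ 2 * (a * b * (c ^ 2 - 1)) := by
    refine (pow_left_inj₀ (mul_nonneg hx1 hx2) (by positivity) two_ne_zero).mp ?_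
    have h1 : (a + b * c) ^ 2 - 1 = b ^ 2 * (c ^ 2 - 1) := by linear_combination hunit
    have h2 : (a * c + b) ^ 2 - 1 = a ^ 2 * (c ^ 2 - 1) := by linear_combination hunit
    rw [mul_pow, hx1sq, hx2sq, h1, h2]
    ring
  rw [hprod, div_eq_iff (by linarith)]
  linear_combination (s ^ 2 * (c + 1) / 2) * hunit

lemma neg_inner_lt_sq (hu : ‖u‖ < s) (hv : ‖v‖ < s) : -⟪u, v⟫ < s ^ 2 := calc
  -⟪u, v⟫ ≤ ‖u‖ * ‖v‖ := (neg_le_abs _).trans (abs_real_inner_le_norm u v)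
  _ < s * s := mul_lt_mul'' hu hv (norm_nonneg u) (norm_nonneg v)
  _ = s ^ 2 := (sq s).symm

lemma one_add_inner_div_sq_pos (hu : ‖u‖ < s) (hv : ‖v‖ < s) :
    0 < 1 + ⟪u, v⟫ / s ^ 2 := by
  have hs : 0 < s ^ 2 := by have := (norm_nonneg u).trans_lt hu; positivity
  have h : 0 < (s ^ 2 + ⟪u, v⟫) / s ^ 2 := div_pos (by linarith [neg_inner_lt_sq hu hv]) hs
  rwa [add_div, div_self hs.ne'] at h

lemma egamma_pos_s16 (hu : ‖u‖ < s) : 0 < egamma s u := by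
  have := one_sub_norm_sq_div_sq_pos hu
  rw [egamma]; positivity

lemma norm_sq_eq_of_egamma (hu : ‖u‖ < s) :
    ‖u‖ ^ 2 = s ^ 2 * (1 - 1 / egamma s u ^ 2) := by
  have h := one_sub_norm_sq_div_sq_pos hu
  have hs : s ≠ 0 := ((norm_nonneg u).trans_lt hu).ne'
  rw [egamma, div_pow, one_pow, Real.sq_sqrt h.le, one_div_one_div]
  field_simp
  ring

lemma eadd_eq_smul_add_smul :
    eadd s u v = (1 + ⟪u, v⟫ / s ^ 2)⁻¹ •
      ((1 + egamma s u / (s ^ 2 * (1 + egamma s u)) * ⟪u, v⟫) • u + (egamma s u)⁻¹ • v) := by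
  rw [eadd]; module

lemma one_sub_norm_eadd_sq (hu : ‖u‖ < s) (hv : ‖v‖ < s) :
    1 - ‖eadd s u v‖ ^ 2 / s ^ 2 =
      (1 - ‖u‖ ^ 2 / s ^ 2) * (1 - ‖v‖ ^ 2 / s ^ 2) / (1 + ⟪u, v⟫ / s ^ 2) ^ 2 := by
  have hs : s ≠ 0 := ((norm_nonneg u).trans_lt hu).ne'
  have hm : s ^ 2 + ⟪u, v⟫ ≠ 0 := (by linarith [neg_inner_lt_sq hu hv] : 0 < s ^ 2 + ⟪u, v⟫).ne'
  have hg := egamma_pos_s16 hu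
  have hu2 := norm_sq_eq_of_egamma hu
  rw [eadd_eq_smul_add_smul, norm_smul, mul_pow, norm_add_sq_real, norm_smul, norm_smul,
    real_inner_smul_left, real_inner_smul_right, mul_pow, mul_pow, hu2]
  simp only [Real.norm_eq_abs, sq_abs]
  generalize egamma s u = g at hg ⊢
  generalize ⟪u, v⟫ = m at hm ⊢
  field_simp
  ring

lemma norm_eadd_lt (hu : ‖u‖ < s) (hv : ‖v‖ < s) : ‖eadd s u v‖ < s := by
  have hs : 0 < s := (norm_nonneg u).trans_lt hu
  have h : 0 < 1 - ‖eadd s u v‖ ^ 2 / s ^ 2 := by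
    rw [one_sub_norm_eadd_sq hu hv]
    have := one_sub_norm_sq_div_sq_pos hu
    have := one_sub_norm_sq_div_sq_pos hv
    have := one_add_inner_div_sq_pos hu hv
    positivity
  rw [sub_pos, div_lt_one (by positivity)] at h
  exact lt_of_pow_lt_pow_left₀ 2 hs.le h

lemma abs_norm_eadd_neg_lt (hu : ‖u‖ < s) (hv : ‖v‖ < s) : |‖eadd s (-u) v‖| < s := by
  rw [abs_norm]
  exact norm_eadd_lt (by rwa [norm_neg]) hv

lemma gammaR_norm_eadd (hu : ‖u‖ < s) (hv : ‖v‖ < s) :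
    gammaR s ‖eadd s u v‖ = egamma s u * egamma s v * (1 + ⟪u, v⟫ / s ^ 2) := by
  have hU := one_sub_norm_sq_div_sq_pos hu
  have hV := one_sub_norm_sq_div_sq_pos hv
  have hD := one_add_inner_div_sq_pos hu hv
  rw [gammaR, one_sub_norm_eadd_sq hu hv, Real.sqrt_div' _ (by positivity), Real.sqrt_sq hD.le,
    Real.sqrt_mul hU.le, egamma, egamma]
  field_simp

lemma gammaR_norm_eadd_neg (hu : ‖u‖ < s) (hv : ‖v‖ < s) :
    gammaR s ‖eadd s (-u) v‖ = egamma s u * egamma s v * (1 - ⟪u, v⟫ / s ^ 2) := by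
  rw [gammaR_norm_eadd (by rwa [norm_neg]) hv, egamma, egamma, egamma, norm_neg, inner_neg_left,
    neg_div, ← sub_eq_add_neg]

lemma gammaR_norm_eadd_neg_comm (hu : ‖u‖ < s) (hv : ‖v‖ < s) :
    gammaR s ‖eadd s (-u) v‖ = gammaR s ‖eadd s (-v) u‖ := by
  rw [gammaR_norm_eadd_neg hu hv, gammaR_norm_eadd_neg hv hu, real_inner_comm,
    mul_comm (egamma s u)]

lemma gammaR_norm_eadd_neg_self (hu : ‖u‖ < s) : gammaR s ‖eadd s (-u) u‖ = 1 := by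
  have h := one_sub_norm_sq_div_sq_pos hu
  rw [gammaR_norm_eadd_neg hu hu, real_inner_self_eq_norm_sq, ← sq, egamma, div_pow, one_pow,
    Real.sq_sqrt h.le, one_div_mul_cancel h.ne']

lemma gammaR_norm_eadd_neg_lineMap {X1 X2 P v : EuclideanSpace ℝ (Fin n)} (hX1 : ‖X1‖ < s)
    (hX2 : ‖X2‖ < s) (hP : ‖P‖ < s) (hv : ‖v‖ < s) {t : ℝ} (hPt : P = AffineMap.lineMap X1 X2 t) :
    gammaR s ‖eadd s (-P) v‖ =
      (1 - t) * egamma s P / egamma s X1 * gammaR s ‖eadd s (-X1) v‖ +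
        t * egamma s P / egamma s X2 * gammaR s ‖eadd s (-X2) v‖ := by
  have h1 := (egamma_pos_s16 hX1).ne'
  have h2 := (egamma_pos_s16 hX2).ne'
  rw [gammaR_norm_eadd_neg hP hv, gammaR_norm_eadd_neg hX1 hv, gammaR_norm_eadd_neg hX2 hv, hPt,
    AffineMap.lineMap_apply_module, inner_add_left, real_inner_smul_left, real_inner_smul_left]
  field_simp
  ring

lemma chord_power {O X1 X2 P : EuclideanSpace ℝ (Fin n)} (hO : ‖O‖ < s) (hX1 : ‖X1‖ < s)
    (hX2 : ‖X2‖ < s) {R : ℝ} (hR1 : ‖eadd s (-O) X1‖ = R) (hR2 : ‖eadd s (-O) X2‖ = R)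
    (hP : Sbtw ℝ X1 P X2) :
    gammaR s ‖eadd s (-P) X1‖ * ‖eadd s (-P) X1‖ * (gammaR s ‖eadd s (-P) X2‖ * ‖eadd s (-P) X2‖) /
        (gammaR s ‖eadd s (-X1) X2‖ + 1) =
      s ^ 2 * (1 - (gammaR s ‖eadd s (-O) P‖ / gammaR s R) ^ 2) / 2 := by
  obtain ⟨t, ⟨ht0, ht1⟩, hPt⟩ := hP.mem_image_Ioo
  have hPs : ‖P‖ < s := by
    simpa [← hPt] using (convex_ball (0 : EuclideanSpace ℝ (Fin n)) s).lineMap_mem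
      (mem_ball_zero_iff.mpr hX1) (mem_ball_zero_iff.mpr hX2) ⟨ht0.le, ht1.le⟩
  set a := (1 - t) * egamma s P / egamma s X1
  set b := t * egamma s P / egamma s X2
  set c := gammaR s ‖eadd s (-X1) X2‖
  have hG : ∀ {v}, ‖v‖ < s → gammaR s ‖eadd s (-P) v‖ =
      a * gammaR s ‖eadd s (-X1) v‖ + b * gammaR s ‖eadd s (-X2) v‖ :=
    fun hv => gammaR_norm_eadd_neg_lineMap hX1 hX2 hPs hv hPt.symm
  have hPX1 : gammaR s ‖eadd s (-P) X1‖ = a + b * c := by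
    rw [hG hX1, gammaR_norm_eadd_neg_self hX1, gammaR_norm_eadd_neg_comm hX2 hX1, mul_one]
  have hPX2 : gammaR s ‖eadd s (-P) X2‖ = a * c + b := by
    rw [hG hX2, gammaR_norm_eadd_neg_self hX2, mul_one]
  have hunit : a * (a + b * c) + b * (a * c + b) = 1 := by
    rw [← hPX1, ← hPX2, ← gammaR_norm_eadd_neg_comm hX1 hPs, ← gammaR_norm_eadd_neg_comm hX2 hPs,
      ← hG hPs, gammaR_norm_eadd_neg_self hPs]
  have hOP : gammaR s ‖eadd s (-O) P‖ = (a + b) * gammaR s R := by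
    rw [gammaR_norm_eadd_neg_comm hO hPs, hG hO, gammaR_norm_eadd_neg_comm hX1 hO,
      gammaR_norm_eadd_neg_comm hX2 hO, hR1, hR2]
    ring
  have hg : 0 < gammaR s R :=
    hR1 ▸ zero_lt_one.trans_le (one_le_gammaR (abs_norm_eadd_neg_lt hO hX1))
  rw [hOP, mul_div_cancel_right₀ _ hg.ne']
  have hγP := egamma_pos_s16 hPs
  refine chord_product_eq
    (div_nonneg (mul_nonneg (sub_nonneg.2 ht1.le) hγP.le) (egamma_pos_s16 hX1).le)
    (div_nonneg (mul_nonneg ht0.le hγP.le) (egamma_pos_s16 hX2).le)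
    (one_le_gammaR (abs_norm_eadd_neg_lt hX1 hX2)) hunit
    (by unfold gammaR; positivity) ?_ (by unfold gammaR; positivity) ?_
  · rw [sq_gammaR_mul_self (abs_norm_eadd_neg_lt hPs hX1), hPX1]
  · rw [sq_gammaR_mul_self (abs_norm_eadd_neg_lt hPs hX2), hPX2]

end Einstein

theorem intersecting_gyrochords_general {n : ℕ} (s : ℝ)
    (O A1 A2 B1 B2 P : EuclideanSpace ℝ (Fin n)) (hO : ‖O‖ < s)
    (R : ℝ)
    (hA1 : ‖A1‖ < s) (hA2 : ‖A2‖ < s) (hB1 : ‖B1‖ < s) (hB2 : ‖B2‖ < s)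
    (hRA1 : ‖eadd s (-O) A1‖ = R) (hRA2 : ‖eadd s (-O) A2‖ = R)
    (hRB1 : ‖eadd s (-O) B1‖ = R) (hRB2 : ‖eadd s (-O) B2‖ = R)
    (hbtwA : Sbtw ℝ A1 P A2) (hbtwB : Sbtw ℝ B1 P B2)
    (dA1 dA2 dB1 dB2 dA dB : ℝ)
    (hdA1 : dA1 = ‖eadd s (-P) A1‖) (hdA2 : dA2 = ‖eadd s (-P) A2‖)
    (hdB1 : dB1 = ‖eadd s (-P) B1‖) (hdB2 : dB2 = ‖eadd s (-P) B2‖)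
    (hdA : dA = ‖eadd s (-A1) A2‖) (hdB : dB = ‖eadd s (-B1) B2‖) :
    gammaR s dA1 * dA1 * (gammaR s dA2 * dA2) / (gammaR s dA + 1) =
      gammaR s dB1 * dB1 * (gammaR s dB2 * dB2) / (gammaR s dB + 1) := by
  subst hdA1 hdA2 hdB1 hdB2 hdA hdB
  rw [chord_power hO hA1 hA2 hRA1 hRA2 hbtwA, chord_power hO hB1 hB2 hRB1 hRB2 hbtwB]

/-- **Intersecting Gyrochords Theorem.** -/
theorem intersecting_gyrochords {n : ℕ} (hn : 2 ≤ n) (s : ℝ) (hs : 0 < s)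
    (O A1 A2 B1 B2 P : EuclideanSpace ℝ (Fin n)) (hO : ‖O‖ < s)
    (R : ℝ) (hRpos : 0 < R) (hRs : R < s)
    (hA1 : ‖A1‖ < s) (hA2 : ‖A2‖ < s) (hB1 : ‖B1‖ < s) (hB2 : ‖B2‖ < s)
    (hRA1 : ‖eadd s (-O) A1‖ = R) (hRA2 : ‖eadd s (-O) A2‖ = R)
    (hRB1 : ‖eadd s (-O) B1‖ = R) (hRB2 : ‖eadd s (-O) B2‖ = R)
    (hA : A1 ≠ A2) (hB : B1 ≠ B2)
    (hbtwA : Sbtw ℝ A1 P A2) (hbtwB : Sbtw ℝ B1 P B2)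
    (dA1 dA2 dB1 dB2 dA dB : ℝ)
    (hdA1 : dA1 = ‖eadd s (-P) A1‖) (hdA2 : dA2 = ‖eadd s (-P) A2‖)
    (hdB1 : dB1 = ‖eadd s (-P) B1‖) (hdB2 : dB2 = ‖eadd s (-P) B2‖)
    (hdA : dA = ‖eadd s (-A1) A2‖) (hdB : dB = ‖eadd s (-B1) B2‖) :
    gammaR s dA1 * dA1 * (gammaR s dA2 * dA2) / (gammaR s dA + 1) =
      gammaR s dB1 * dB1 * (gammaR s dB2 * dB2) / (gammaR s dB + 1) :=
  intersecting_gyrochords_general s O A1 A2 B1 B2 P hO R hA1 hA2 hB1 hB2 hRA1 hRA2 hRB1 hRB2 hbtwA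
    hbtwB dA1 dA2 dB1 dB2 dA dB hdA1 hdA2 hdB1 hdB2 hdA hdB
end
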